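/- arXiv:1404.4327 — 2 statements merged into one kernel-verified Lean document; each statement's English description precedes it below -/
import Mathlib

section
/- Let U be a unitary k×k complex matrix, let P be an orthogonal projection on ℂ^k, and let δ ≥ 0 satisfy ‖[P, U]‖ ≤ δ. Let T be the compression of U to range(P), i.e. the map v ↦ P U v on range(P). Then ‖T T† − Id_{range(P)}‖ ≤ δ². -/
/-- The compression of an operator `U` to the range of `P`: the map `v ↦ P (U v)`
on `range P`. -/
noncomputable def compress {E : Type*} [NormedAddCommGroup E] [InnerProductSpace ℂ E]
    (P U : E →L[ℂ] E) : (LinearMap.range (P : E →ₗ[ℂ] E)) →L[ℂ] (LinearMap.range (P : E →ₗ[ℂ] E)) :=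
  ((P ∘L U) ∘L (LinearMap.range (P : E →ₗ[ℂ] E)).subtypeL).codRestrict (LinearMap.range (P : E →ₗ[ℂ] E))
    (fun v => LinearMap.mem_range.mpr ⟨U v, rfl⟩)

/-! For `T = compress P U`, the operator `T T† - 1` is the compression of `U P U† - 1`, and
`P (U P U† - 1) P = -(A A†)` for the off-diagonal block `A = P U (1 - P) = [P, U] (1 - P)`.
By the C⋆-identity its norm is `‖A‖² ≤ ‖[P, U]‖²`. -/

section Algebra

variable {A : Type*} {P U : A}

theorem IsIdempotentElem.commutator_mul_one_sub [Ring A] (hP : IsIdempotentElem P) :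
    (P * U - U * P) * (1 - P) = P * U * (1 - P) := by
  rw [sub_mul, mul_assoc U, hP.mul_one_sub_self, mul_zero, sub_zero]

theorem IsStarProjection.mul_conj_sub_one_mul_eq_neg_mul_star [Ring A] [StarRing A]
    (hP : IsStarProjection P) (hU : U * star U = 1) :
    P * (U * P * star U - 1) * P = -(P * U * (1 - P) * star (P * U * (1 - P))) := by
  simp only [star_mul, star_sub, star_one, hP.isSelfAdjoint.star_eq]
  calc P * (U * P * star U - 1) * P = P * U * P * star U * P - P * (U * star U) * P := by
        rw [hU, mul_one]; noncomm_ring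
    _ = -(P * U * ((1 - P) * (1 - P)) * star U * P) := by
        rw [hP.one_sub.isIdempotentElem.eq]; noncomm_ring
    _ = _ := by noncomm_ring

theorem IsStarProjection.norm_mul_conj_sub_one_mul_le_norm_commutator_sq
    [NormedRing A] [StarRing A] [CStarRing A]
    (hP : IsStarProjection P) (hU : U * star U = 1) :
    ‖P * (U * P * star U - 1) * P‖ ≤ ‖P * U - U * P‖ ^ 2 := by
  have hoff : ‖P * U * (1 - P)‖ ≤ ‖P * U - U * P‖ := by
    rw [← hP.isIdempotentElem.commutator_mul_one_sub]
    exact (norm_mul_le _ _).trans (mul_le_of_le_one_right (norm_nonneg _) (hP.one_sub.norm_le _))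
  rw [hP.mul_conj_sub_one_mul_eq_neg_mul_star hU, norm_neg, CStarRing.norm_self_mul_star, ← sq]
  gcongr

end Algebra

open scoped InnerProductSpace InnerProduct

section Compress

variable {E : Type*} [NormedAddCommGroup E] [InnerProductSpace ℂ E] {P : E →L[ℂ] E}

@[simp]
theorem compress_apply (U : E →L[ℂ] E) (v : LinearMap.range (P : E →ₗ[ℂ] E)) :
    (compress P U v : E) = P (U v) := rfl

theorem compress_mul_compress (U V : E →L[ℂ] E) :
    compress P U * compress P V = compress P (U * P * V) := rfl

theorem compress_sub (U V : E →L[ℂ] E) :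
    compress P (U - V) = compress P U - compress P V := by
  ext v; simp

theorem IsIdempotentElem.apply_of_mem_range (hP : IsIdempotentElem P)
    (v : LinearMap.range (P : E →ₗ[ℂ] E)) :
    P v = v := by
  obtain ⟨_, w, rfl⟩ := v
  exact congr($hP w)

theorem compress_one (hP : IsIdempotentElem P) : compress P 1 = 1 := by
  ext v; simp [hP.apply_of_mem_range]

theorem norm_compress_le (hP : IsIdempotentElem P) (U : E →L[ℂ] E) :
    ‖compress P U‖ ≤ ‖P * U * P‖ :=
  (compress P U).opNorm_le_bound (norm_nonneg _) fun v => by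
    rw [← Submodule.norm_coe, compress_apply, ← Submodule.norm_coe v]
    conv_lhs => rw [← hP.apply_of_mem_range v]
    exact (P * U * P).le_opNorm v

theorem star_compress [CompleteSpace E] [CompleteSpace (LinearMap.range (P : E →ₗ[ℂ] E))]
    (hP : IsStarProjection P) (U : E →L[ℂ] E) : star (compress P U) = compress P (star U) := by
  have hPsymm := ContinuousLinearMap.isSelfAdjoint_iff_isSymmetric.mp hP.isSelfAdjoint
  have hPv := hP.isIdempotentElem.apply_of_mem_range
  rw [ContinuousLinearMap.star_eq_adjoint, eq_comm, ContinuousLinearMap.eq_adjoint_iff]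
  intro v w
  simp only [Submodule.coe_inner, compress_apply, ContinuousLinearMap.star_eq_adjoint]
  calc ⟪P ((U†) v), w⟫_ℂ = ⟪(U†) v, P w⟫_ℂ := hPsymm _ _
    _ = ⟪P v, U w⟫_ℂ := by rw [hPv, hPv, ContinuousLinearMap.adjoint_inner_left]
    _ = ⟪(v : E), P (U w)⟫_ℂ := hPsymm _ _

end Compress

theorem stmt4_general
    (E : Type*) [NormedAddCommGroup E] [InnerProductSpace ℂ E] [FiniteDimensional ℂ E]
    (U : E →L[ℂ] E) (hU : U ∈ unitary (E →L[ℂ] E))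
    (P : E →L[ℂ] E) (hPsa : IsSelfAdjoint P) (hPproj : P * P = P)
    (δ : ℝ)
    (hPU : ‖P * U - U * P‖ ≤ δ) :
    ‖compress P U * star (compress P U) - 1‖ ≤ δ ^ 2 := by
  have hP : IsStarProjection P := ⟨hPproj, hPsa⟩
  calc ‖compress P U * star (compress P U) - 1‖
      = ‖compress P (U * P * star U - 1)‖ := by
        rw [star_compress hP, compress_mul_compress, compress_sub, compress_one hPproj]
    _ ≤ ‖P * (U * P * star U - 1) * P‖ := norm_compress_le hPproj _
    _ ≤ ‖P * U - U * P‖ ^ 2 :=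
        hP.norm_mul_conj_sub_one_mul_le_norm_commutator_sq (Unitary.mul_star_self_of_mem hU)
    _ ≤ δ ^ 2 := by gcongr

theorem stmt4 {k : ℕ} (hk : 1 ≤ k)
    (E : Type*) [NormedAddCommGroup E] [InnerProductSpace ℂ E] [FiniteDimensional ℂ E]
    (hdim : Module.finrank ℂ E = k)
    (U : E →L[ℂ] E) (hU : U ∈ unitary (E →L[ℂ] E))
    (P : E →L[ℂ] E) (hPsa : IsSelfAdjoint P) (hPproj : P * P = P)
    (δ : ℝ) (hδ0 : 0 ≤ δ)
    (hPU : ‖P * U - U * P‖ ≤ δ) :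
    ‖compress P U * star (compress P U) - 1‖ ≤ δ ^ 2 :=
  stmt4_general E U hU P hPsa hPproj δ hPU
end

section
/- Let n ≥ 1 and let F : ({0,1})^n → {0,1} be monotone, meaning that if s_i ≤ t_i for all i then F(s) ≤ F(t). For p ∈ [0,1] define f(p) = Σ_{s : F(s)=1} p^{|s|} (1−p)^{n−|s|}, where |s| = #{i : s_i = 1}. If p ∈ (0, 1/2] and f(p) > p, then f(p) + f(1−p) > 1. -/
/-- The probability that the Boolean function `F` equals `1` when each of the `n` input bits
is independently `1` with probability `p`. -/
noncomputable def boolAvg (n : ℕ) (F : (Fin n → Bool) → Bool) (p : ℝ) : ℝ :=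
  ∑ s : Fin n → Bool, if F s then
    p ^ (Finset.univ.filter fun i => s i = true).card *
      (1 - p) ^ (n - (Finset.univ.filter fun i => s i = true).card)
  else 0

/-!
Write `f = boolAvg n F`. Splitting on the first bit, `f = (1 - x) f₀ + x f₁` with monotone
`f₀ ≤ f₁`, and induction on `n` gives the differential inequality
`f (1 - f) ≤ x (1 - x) f'` on `[0, 1]`. It says exactly that `logit ∘ f - logit` is nondecreasing
wherever `f` takes values in `(0, 1)`, so once `f` lies above the diagonal it stays there:
`p < f p` and `p ≤ q < 1` give `q < f q`. Taking `q = 1 - p` yields `f p + f (1 - p) > p + (1 - p)`.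
-/

open Set

noncomputable def logit (y : ℝ) : ℝ := Real.log y - Real.log (1 - y)

lemma logit_strictMonoOn : StrictMonoOn logit (Ioo 0 1) := by
  intro y hy z hz hyz
  have := Real.log_lt_log hy.1 hyz
  have := Real.log_lt_log (sub_pos.2 hz.2) (sub_lt_sub_left hyz 1)
  unfold logit
  linarith

lemma hasDerivAt_logit {y : ℝ} (hy : y ∈ Ioo 0 1) :
    HasDerivAt logit (y⁻¹ + (1 - y)⁻¹) y := by
  have h : HasDerivAt logit (y⁻¹ - (1 - y)⁻¹ * -1) y :=
    (Real.hasDerivAt_log hy.1.ne').sub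
      ((Real.hasDerivAt_log (sub_pos.2 hy.2).ne').comp y ((hasDerivAt_id y).const_sub 1))
  convert h using 1
  ring

lemma monotoneOn_logit_comp_sub_logit {f f' : ℝ → ℝ} {a b : ℝ} (ha : 0 < a) (hb : b < 1)
    (hf : ∀ y ∈ Icc a b, HasDerivAt f (f' y) y) (hf01 : ∀ y ∈ Icc a b, f y ∈ Ioo 0 1)
    (hf' : ∀ y ∈ Icc a b, f y * (1 - f y) ≤ y * (1 - y) * f' y) :
    MonotoneOn (fun y => logit (f y) - logit y) (Icc a b) := by
  have hy01 : ∀ y ∈ Icc a b, y ∈ Ioo (0 : ℝ) 1 := fun y hy => ⟨ha.trans_le hy.1, hy.2.trans_lt hb⟩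
  have hderiv : ∀ y ∈ Icc a b, HasDerivAt (fun y => logit (f y) - logit y)
      (((f y)⁻¹ + (1 - f y)⁻¹) * f' y - (y⁻¹ + (1 - y)⁻¹)) y := fun y hy =>
    ((hasDerivAt_logit (hf01 y hy)).comp y (hf y hy)).sub (hasDerivAt_logit (hy01 y hy))
  refine monotoneOn_of_deriv_nonneg (convex_Icc a b)
    (fun y hy => (hderiv y hy).continuousAt.continuousWithinAt)
    (fun y hy => (hderiv y (interior_subset hy)).differentiableAt.differentiableWithinAt)
    (fun y hy => ?_)
  replace hy := interior_subset hy
  obtain ⟨hfy0, hfy1⟩ := hf01 y hy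
  obtain ⟨hy0, hy1⟩ := hy01 y hy
  rw [(hderiv y hy).deriv]
  have hfy : 0 < f y * (1 - f y) := mul_pos hfy0 (sub_pos.2 hfy1)
  have hyy : 0 < y * (1 - y) := mul_pos hy0 (sub_pos.2 hy1)
  have hderiv_eq : ((f y)⁻¹ + (1 - f y)⁻¹) * f' y - (y⁻¹ + (1 - y)⁻¹)
      = (y * (1 - y) * f' y - f y * (1 - f y)) / (f y * (1 - f y) * (y * (1 - y))) := by
    field_simp
    ring
  rw [hderiv_eq]
  exact div_nonneg (sub_nonneg.2 (hf' y hy)) (mul_pos hfy hyy).le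

section boolAvg

variable {n : ℕ}

lemma card_filter_cons_eq_true (b : Bool) (s : Fin n → Bool) :
    (Finset.univ.filter fun i => (Fin.cons b s : Fin (n + 1) → Bool) i = true).card
      = b.toNat + (Finset.univ.filter fun i => s i = true).card := by
  rw [Finset.card_filter, Finset.card_filter, Fin.sum_univ_succ]
  cases b <;> simp

lemma boolAvg_succ (F : (Fin (n + 1) → Bool) → Bool) (x : ℝ) :
    boolAvg (n + 1) F x = (1 - x) * boolAvg n (fun s => F (Fin.cons false s)) x
      + x * boolAvg n (fun s => F (Fin.cons true s)) x := by
  simp only [boolAvg, Finset.mul_sum, ← Finset.sum_add_distrib]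
  rw [← (Fin.consEquiv fun _ => Bool).sum_comp, Fintype.sum_prod_type, Fintype.sum_bool,
    ← Finset.sum_add_distrib]
  refine Finset.sum_congr rfl fun s _ => ?_
  have hk : (Finset.univ.filter fun i => s i = true).card ≤ n :=
    (Finset.card_le_univ _).trans_eq (Fintype.card_fin n)
  have hcons : ∀ b, (Fin.consEquiv fun _ => Bool) (b, s) = Fin.cons b s := fun _ => rfl
  simp only [hcons, card_filter_cons_eq_true, Bool.toNat_true, Bool.toNat_false, zero_add]
  generalize (Finset.univ.filter fun i => s i = true).card = k at hk ⊢
  rw [show n + 1 - (1 + k) = n - k by omega, show n + 1 - k = n - k + 1 by omega]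
  split_ifs <;> ring

lemma boolAvg_zero (F : (Fin 0 → Bool) → Bool) :
    boolAvg 0 F = fun _ => if F Fin.elim0 then 1 else 0 := by
  ext x
  simp [boolAvg, Subsingleton.elim _ (Fin.elim0 : Fin 0 → Bool)]

lemma boolAvg_le_boolAvg {F G : (Fin n → Bool) → Bool} (hFG : F ≤ G) {x : ℝ}
    (hx0 : 0 ≤ x) (hx1 : x ≤ 1) : boolAvg n F x ≤ boolAvg n G x := by
  refine Finset.sum_le_sum fun s _ => ?_
  have hFGs : F s → G s := Bool.le_iff_imp.1 (hFG s)
  split_ifs with hF hG hG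
  · exact le_rfl
  · exact absurd (hFGs hF) hG
  · exact mul_nonneg (pow_nonneg hx0 _) (pow_nonneg (sub_nonneg.2 hx1) _)
  · exact le_rfl

lemma boolAvg_bot (x : ℝ) : boolAvg n ⊥ x = 0 := by
  simp [boolAvg]

lemma boolAvg_top (x : ℝ) : boolAvg n ⊤ x = 1 := by
  induction n with
  | zero => simp [boolAvg_zero]
  | succ n ih =>
    rw [boolAvg_succ]
    change (1 - x) * boolAvg n ⊤ x + x * boolAvg n ⊤ x = 1
    rw [ih]
    ring

lemma boolAvg_nonneg (F : (Fin n → Bool) → Bool) {x : ℝ} (hx0 : 0 ≤ x) (hx1 : x ≤ 1) :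
    0 ≤ boolAvg n F x :=
  boolAvg_bot (n := n) x ▸ boolAvg_le_boolAvg bot_le hx0 hx1

lemma boolAvg_le_one (F : (Fin n → Bool) → Bool) {x : ℝ} (hx0 : 0 ≤ x) (hx1 : x ≤ 1) :
    boolAvg n F x ≤ 1 :=
  boolAvg_top (n := n) x ▸ boolAvg_le_boolAvg le_top hx0 hx1

lemma differentiable_boolAvg (F : (Fin n → Bool) → Bool) :
    Differentiable ℝ (boolAvg n F) := by
  induction n with
  | zero => simp [boolAvg_zero]
  | succ n ih =>
    rw [funext (boolAvg_succ F)]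
    have := ih fun s => F (Fin.cons false s)
    have := ih fun s => F (Fin.cons true s)
    fun_prop

lemma boolAvg_mul_one_sub_le_deriv {F : (Fin n → Bool) → Bool} (hF : Monotone F) {x : ℝ}
    (hx0 : 0 ≤ x) (hx1 : x ≤ 1) :
    boolAvg n F x * (1 - boolAvg n F x) ≤ x * (1 - x) * deriv (boolAvg n F) x := by
  induction n with
  | zero =>
    rw [boolAvg_zero, deriv_const]
    split_ifs <;> norm_num
  | succ n ih =>
    have hcons (b : Bool) : Monotone fun s => F (Fin.cons b s) :=
      fun s t hst => hF (Fin.cons_le_cons.2 ⟨le_rfl, hst⟩)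
    set A := boolAvg n fun s => F (Fin.cons false s)
    set B := boolAvg n fun s => F (Fin.cons true s)
    have hderiv : HasDerivAt (boolAvg (n + 1) F)
        (-1 * A x + (1 - x) * deriv A x + (1 * B x + x * deriv B x)) x := by
      rw [funext (boolAvg_succ F)]
      exact (((hasDerivAt_id x).const_sub 1).mul (differentiable_boolAvg _ x).hasDerivAt).add
        ((hasDerivAt_id x).mul (differentiable_boolAvg _ x).hasDerivAt)
    rw [hderiv.deriv, boolAvg_succ]
    have hAB : A x ≤ B x :=
      boolAvg_le_boolAvg (fun s => hF (Fin.cons_le_cons.2 ⟨Bool.false_le _, le_rfl⟩)) hx0 hx1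
    have hA := ih (hcons false)
    have hB := ih (hcons true)
    have hBA : 0 ≤ x * (1 - x) * ((B x - A x) * (1 - (B x - A x))) := by
      have := boolAvg_nonneg (fun s => F (Fin.cons false s)) hx0 hx1
      have := boolAvg_le_one (fun s => F (Fin.cons true s)) hx0 hx1
      exact mul_nonneg (mul_nonneg hx0 (sub_nonneg.2 hx1))
        (mul_nonneg (sub_nonneg.2 hAB) (by linarith))
    -- `x(1-x)f' - f(1-f) = (1-x)[x(1-x)A' - A(1-A)] + x[x(1-x)B' - B(1-B)]`
    -- `  + x(1-x)(B-A)(1-(B-A))`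
    linear_combination (1 - x) * hA + x * hB + hBA

lemma monotoneOn_boolAvg {F : (Fin n → Bool) → Bool} (hF : Monotone F) :
    MonotoneOn (boolAvg n F) (Icc 0 1) := by
  have hf := differentiable_boolAvg F
  refine monotoneOn_of_deriv_nonneg (convex_Icc 0 1) hf.continuous.continuousOn
    hf.differentiableOn fun x hx => ?_
  rw [interior_Icc] at hx
  have hxx : 0 < x * (1 - x) := mul_pos hx.1 (sub_pos.2 hx.2)
  have := boolAvg_nonneg F hx.1.le hx.2.le
  have := boolAvg_le_one F hx.1.le hx.2.le
  have := boolAvg_mul_one_sub_le_deriv hF hx.1.le hx.2.le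
  nlinarith

theorem lt_boolAvg_of_lt_boolAvg {F : (Fin n → Bool) → Bool} (hF : Monotone F) {p q : ℝ}
    (hp0 : 0 < p) (hpq : p ≤ q) (hq1 : q < 1) (hp : p < boolAvg n F p) : q < boolAvg n F q := by
  by_contra! hq
  have hsub : Icc p q ⊆ Icc 0 1 := Icc_subset_Icc hp0.le hq1.le
  have hpI : p ∈ Icc p q := ⟨le_rfl, hpq⟩
  have hqI : q ∈ Icc p q := ⟨hpq, le_rfl⟩
  have hf01 (y : ℝ) (hy : y ∈ Icc p q) : boolAvg n F y ∈ Ioo 0 1 :=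
    ⟨hp0.trans (hp.trans_le (monotoneOn_boolAvg hF (hsub hpI) (hsub hy) hy.1)),
      ((monotoneOn_boolAvg hF (hsub hy) (hsub hqI) hy.2).trans hq).trans_lt hq1⟩
  have hlogit := monotoneOn_logit_comp_sub_logit hp0 hq1
    (fun y _ => (differentiable_boolAvg F y).hasDerivAt) hf01
    (fun y hy => boolAvg_mul_one_sub_le_deriv hF (hsub hy).1 (hsub hy).2) hpI hqI hpq
  have hlp := logit_strictMonoOn ⟨hp0, hpq.trans_lt hq1⟩ (hf01 p hpI) hp
  have hlq := logit_strictMonoOn.monotoneOn (hf01 q hqI) ⟨hp0.trans_le hpq, hq1⟩ hq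
  dsimp only at hlogit
  linarith

end boolAvg

theorem stmt18_general (n : ℕ) (F : (Fin n → Bool) → Bool)
    (hmono : ∀ s t : Fin n → Bool, (∀ i, s i ≤ t i) → F s ≤ F t)
    (p : ℝ) (hp0 : 0 < p) (hp2 : p ≤ 1 / 2) (hfp : p < boolAvg n F p) :
    1 < boolAvg n F p + boolAvg n F (1 - p) := by
  have hq := lt_boolAvg_of_lt_boolAvg (fun s t hst => hmono s t hst) hp0
    (by linarith : p ≤ 1 - p) (by linarith) hfp
  linarith

theorem stmt18 (n : ℕ) (hn : 1 ≤ n) (F : (Fin n → Bool) → Bool)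
    (hmono : ∀ s t : Fin n → Bool, (∀ i, s i ≤ t i) → F s ≤ F t)
    (p : ℝ) (hp0 : 0 < p) (hp2 : p ≤ 1 / 2) (hfp : p < boolAvg n F p) :
    1 < boolAvg n F p + boolAvg n F (1 - p) :=
  stmt18_general n F hmono p hp0 hp2 hfp
end
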